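/- arXiv:2504.01107 — 3 statements merged into one kernel-verified Lean document; each statement's English description precedes it below -/
import Mathlib

section
/- Let n = 2r₁+⋯+2r_m, γ = γ_{2r₁,…,2r_m}, O the odd numbers in [n]. For π ∈ S_n parity reversing with γπ⁻¹ separating O, define the half π̌ ∈ S_{r₁+⋯+r_m} by π̌(k) = π(π(2k))/2. Then: (1) #(π) = #(π̌); (2) γ π⁻¹(2k) = 2l if and only if γ_{r₁,…,r_m} π̌⁻¹(k) = l; (3) #(γ_{r₁,…,r_m} π̌⁻¹) + (r₁+⋯+r_m) = #(γ π⁻¹). -/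
open Equiv

namespace ThirdOrderFree

variable {α : Type*}

/-- The setoid whose classes are the cycles (orbits) of a permutation. -/
def sameCycleSetoid (σ : Perm α) : Setoid α :=
  ⟨σ.SameCycle,
    ⟨fun x => Equiv.Perm.SameCycle.refl σ x, fun h => h.symm, fun h h' => h.trans h'⟩⟩

/-- Number of cycles (orbits, including fixed points) of a permutation. -/
noncomputable def numCycles (σ : Perm α) : ℕ :=
  Nat.card (Quotient (sameCycleSetoid σ))

/-- The length `|σ| = n - #(σ)`. -/
noncomputable def len (σ : Perm α) : ℕ :=
  Nat.card α - numCycles σ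

/-- Join of the cycle partitions of two permutations. -/
def joinSetoid (π σ : Perm α) : Setoid α :=
  sameCycleSetoid π ⊔ sameCycleSetoid σ

/-- Number of blocks of `π ∨ σ`. -/
noncomputable def numBlocks (π σ : Perm α) : ℕ :=
  Nat.card (Quotient (joinSetoid π σ))

/-- `π ∨ σ` is the one-block partition. -/
def JoinTop (π σ : Perm α) : Prop :=
  ∀ x y : α, (joinSetoid π σ).r x y

/-- `π` is a non-crossing (annular) permutation with respect to `γ`. -/
def SNC (γ π : Perm α) : Prop :=
  JoinTop π γ ∧
    numCycles π + numCycles (π⁻¹ * γ) + numCycles γ = Nat.card α + 2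

/-- `τ` separates the points of `N`: no cycle of `τ` contains two distinct points of `N`. -/
def Separates (τ : Perm α) (N : Set α) : Prop :=
  ∀ x ∈ N, ∀ y ∈ N, τ.SameCycle x y → x = y

/-- The first-return map of `σ` on the set `{x | p x}`. -/
noncomputable def firstReturn (σ : Perm α) (p : α → Prop) (x : α) : α :=
  (σ ^ sInf {k : ℕ | 0 < k ∧ p ((σ ^ k) x)}) x

open Classical in
/-- The restriction of `σ` to `{x | p x}`: the unique permutation agreeing with the
first-return map (it exists whenever `α` is finite). -/
noncomputable def restrictPerm (σ : Perm α) (p : α → Prop) : Perm {x // p x} :=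
  if h : ∃ e : Perm {x // p x}, ∀ x : {x // p x}, (e x : α) = firstReturn σ p (x : α)
  then h.choose else 1

/-- `π ≤ σ` : each cycle of `π` is contained in a cycle of `σ` and on each cycle of
`σ` the restriction of `π` is a non-crossing permutation of that cycle. -/
def le' (π σ : Perm α) : Prop :=
  (∀ x y : α, π.SameCycle x y → σ.SameCycle x y) ∧
  ∀ x : α,
    numCycles (restrictPerm π (σ.SameCycle x)) +
      numCycles ((restrictPerm π (σ.SameCycle x))⁻¹ * restrictPerm σ (σ.SameCycle x)) =
      Nat.card {y // σ.SameCycle x y} + 1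

/-- `π ≲ σ` : on each block of `π ∨ σ`, `π` is annular non-crossing w.r.t. `σ`. -/
def ncRel (π σ : Perm α) : Prop :=
  ∀ x : α,
    SNC (restrictPerm σ ((joinSetoid π σ).r x)) (restrictPerm π ((joinSetoid π σ).r x))

/-- The permutation of `Σ i, Fin (n i)` rotating each block: the product of the
directed cycles `T i` of lengths `n i`. -/
def blockRotate {ι : Type*} (n : ι → ℕ) : Perm ((i : ι) × Fin (n i)) :=
  Equiv.sigmaCongrRight fun i => finRotate (n i)

/-- The first elements of the blocks. -/
def zeroSection {ι : Type*} (n : ι → ℕ) (hn : ∀ i, 0 < n i) :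
    ι ≃ {x : (i : ι) × Fin (n i) // x.2.val = 0} where
  toFun i := ⟨⟨i, ⟨0, hn i⟩⟩, rfl⟩
  invFun x := x.1.1
  left_inv i := rfl
  right_inv := fun x => by
    obtain ⟨⟨i, j⟩, hj⟩ := x
    exact Subtype.ext (congrArg (Sigma.mk i) (Fin.ext hj.symm))

/-- `π_{\vec n}` : merge the blocks `T i` along the cycles of `π`; within a block it
moves forward, and the last element of block `i` is sent to the first element of
block `π i`. -/
def mergePerm {ι : Type*} (n : ι → ℕ) (hn : ∀ i, 0 < n i) (π : Perm ι) :
    Perm ((i : ι) × Fin (n i)) :=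
  (π.extendDomain (zeroSection n hn)) * blockRotate n

/-!
In the paper's numbering, `γπ⁻¹` maps each odd point to an odd point of its own cycle, so by
separation it fixes every odd point. Hence `π = γ` on the even points, and the doubling map
`k ↦ 2k` conjugates `γ_{r₁,…,r_m} π̌⁻¹` to `γπ⁻¹` restricted to the evens: this is (2), and
adding the `n/2` fixed odd points gives (3). For (1), `π` reverses parity, so two even points of
a `π`-cycle are an even power of `π` apart; the `π`-cycles, each of which meets the evens, are
therefore the cycles of `π²` on the evens, which doubling identifies with those of `π̌`.
-/

open Function

section CycleCounting

variable {α β : Type*} {τ : Perm β} {σ : Perm α} {f : β → α}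

theorem semiconj_zpow (h : Semiconj f τ σ) (k : ℤ) : Semiconj f ⇑(τ ^ k) ⇑(σ ^ k) := by
  induction k using Int.induction_on with
  | zero => exact Semiconj.id_right
  | succ k ih =>
    rw [zpow_add_one, zpow_add_one, Perm.coe_mul, Perm.coe_mul]
    exact ih.comp_right h
  | pred k ih =>
    rw [zpow_sub_one, zpow_sub_one, Perm.coe_mul, Perm.coe_mul]
    exact ih.comp_right (h.inverses_right τ.apply_symm_apply σ.symm_apply_apply)

theorem sameCycle_iff_of_semiconj (hf : Injective f) (h : Semiconj f τ σ) (a b : β) :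
    τ.SameCycle a b ↔ σ.SameCycle (f a) (f b) :=
  exists_congr fun k => by rw [← (semiconj_zpow h k).eq, hf.eq_iff]

theorem numCycles_eq_of_sameCycle_iff (hcyc : ∀ a b, τ.SameCycle a b ↔ σ.SameCycle (f a) (f b))
    (hmeet : ∀ y, ∃ x, σ.SameCycle (f x) y) : numCycles τ = numCycles σ := by
  refine Nat.card_congr (Equiv.ofBijective
    (Quotient.map' (s₁ := sameCycleSetoid τ) (s₂ := sameCycleSetoid σ) f fun a b => (hcyc a b).1)
    ⟨?_, ?_⟩)
  · rintro ⟨a⟩ ⟨b⟩ h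
    exact Quotient.sound ((hcyc a b).2 (Quotient.exact h))
  · rintro ⟨y⟩
    obtain ⟨x, hx⟩ := hmeet y
    exact ⟨Quotient.mk _ x, Quotient.sound hx⟩

theorem numCycles_add_card_eq [Finite α] (hf : Injective f)
    (hcyc : ∀ a b, τ.SameCycle a b ↔ σ.SameCycle (f a) (f b))
    (hfix : ∀ y ∉ Set.range f, σ y = y) :
    numCycles τ + Nat.card α = numCycles σ + Nat.card β := by
  have : Finite β := Finite.of_injective f hf
  have he : Bijective (Sum.elim (Quotient.map' f fun a b => (hcyc a b).1) fun y => Quotient.mk _ y :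
      Quotient (sameCycleSetoid τ) ⊕ ↥(Set.range f)ᶜ → Quotient (sameCycleSetoid σ)) := by
    constructor
    · rintro (⟨⟨a⟩⟩ | ⟨y, hy⟩) (⟨⟨b⟩⟩ | ⟨z, hz⟩) h
      · exact congrArg Sum.inl (Quotient.sound ((hcyc a b).2 (Quotient.exact h)))
      · have h : σ.SameCycle (f a) z := Quotient.exact h
        exact (hz ⟨a, h.eq_of_right (hfix z hz)⟩).elim
      · have h : σ.SameCycle y (f b) := Quotient.exact h
        exact (hy ⟨b, (h.eq_of_left (hfix y hy)).symm⟩).elim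
      · have h : σ.SameCycle y z := Quotient.exact h
        exact congrArg Sum.inr (Subtype.ext (h.eq_of_left (hfix y hy)))
    · rintro ⟨y⟩
      by_cases hy : y ∈ Set.range f
      · obtain ⟨x, rfl⟩ := hy
        exact ⟨Sum.inl (Quotient.mk _ x), rfl⟩
      · exact ⟨Sum.inr ⟨y, hy⟩, rfl⟩
  have hquot := Nat.card_congr (Equiv.ofBijective _ he)
  have hcompl := Set.ncard_add_ncard_compl (Set.range f)
  rw [Nat.card_sum] at hquot
  rw [Set.ncard_range_of_injective hf, ← Nat.card_coe_set_eq] at hcompl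
  unfold numCycles
  omega

end CycleCounting

section ParityReversing

variable {α β : Type*} {π γ : Perm α} {c : α → ZMod 2}

theorem parity_zpow_apply (hc : ∀ x, c (π x) = c x + 1) (k : ℤ) (x : α) :
    c ((π ^ k) x) = c x + k := by
  have hc_inv (x : α) : c (π⁻¹ x) = c x - 1 := by
    have := hc (π⁻¹ x)
    rw [Perm.coe_inv, apply_symm_apply] at this
    linear_combination -this
  induction k using Int.induction_on generalizing x with
  | zero => simp
  | succ k ih => rw [zpow_add_one, Perm.mul_apply, ih, hc]; push_cast; ring
  | pred k ih => rw [zpow_sub_one, Perm.mul_apply, ih, hc_inv]; push_cast; ring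

theorem _root_.Equiv.Perm.SameCycle.sq_of_parity (hc : ∀ x, c (π x) = c x + 1) {x y : α}
    (hxy : c x = c y) (h : π.SameCycle x y) : (π ^ 2).SameCycle x y := by
  obtain ⟨k, rfl⟩ := h
  have hk : ((k : ℤ) : ZMod 2) = 0 := by
    simpa [hxy] using (parity_zpow_apply hc k x).symm
  obtain ⟨j, rfl⟩ := (ZMod.intCast_zmod_eq_zero_iff_dvd k 2).1 hk
  exact ⟨j, by rw [← zpow_natCast, ← zpow_mul]⟩

theorem numCycles_eq_of_semiconj_sq {πh : Perm β} {f : β → α} (hc : ∀ x, c (π x) = c x + 1)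
    (hf : Injective f) (hrange : Set.range f = {x | c x = 1}) (h : Semiconj f πh ⇑(π ^ 2)) :
    numCycles πh = numCycles π := by
  have hf1 (a : β) : c (f a) = 1 := hrange.subset ⟨a, rfl⟩
  refine numCycles_eq_of_sameCycle_iff (f := f) (fun a b => ?_) fun y => ?_
  · rw [sameCycle_iff_of_semiconj hf h]
    exact ⟨Perm.SameCycle.of_pow, Perm.SameCycle.sq_of_parity hc ((hf1 a).trans (hf1 b).symm)⟩
  · obtain hy | hy : c y = 1 ∨ c (π y) = 1 := by rw [hc]; generalize c y = a; revert a; decide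
    · obtain ⟨x, rfl⟩ : y ∈ Set.range f := hrange.superset hy
      exact ⟨x, Perm.SameCycle.rfl⟩
    · obtain ⟨x, hx⟩ : π y ∈ Set.range f := hrange.superset hy
      exact ⟨x, by rw [hx]; exact Perm.SameCycle.rfl.apply_left⟩

theorem Separates.apply_eq_self {N : Set α} (h : Separates π N) {x : α} (hx : x ∈ N)
    (hπx : π x ∈ N) : π x = x :=
  (h x hx (π x) hπx Perm.SameCycle.rfl.apply_right).symm

theorem mul_inv_apply_eq_self_of_separates (hπ : ∀ x, c (π x) = c x + 1)
    (hγ : ∀ x, c (γ x) = c x + 1) (hsep : Separates (γ * π⁻¹) {x | c x = 0}) {x : α}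
    (hx : c x = 0) : (γ * π⁻¹) x = x := by
  refine hsep.apply_eq_self hx ?_
  have := hπ (π⁻¹ x)
  rw [Perm.coe_inv, apply_symm_apply] at this
  show c (γ (π⁻¹ x)) = 0
  linear_combination hγ (π⁻¹ x) - this + hx

theorem apply_eq_of_separates (hπ : ∀ x, c (π x) = c x + 1) (hγ : ∀ x, c (γ x) = c x + 1)
    (hsep : Separates (γ * π⁻¹) {x | c x = 0}) {x : α} (hx : c x = 1) : π x = γ x := by
  have hγx : c (γ x) = 0 := by rw [hγ, hx]; decide
  have := mul_inv_apply_eq_self_of_separates hπ hγ hsep hγx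
  rw [Perm.mul_apply, γ.injective.eq_iff, Perm.inv_eq_iff_eq] at this
  exact this.symm

theorem semiconj_mul_inv {πh ρ : Perm β} {f : β → α} (hπh : Semiconj f πh ⇑(π ^ 2))
    (hρ : Semiconj f ρ ⇑(γ ^ 2)) (hπγ : ∀ z, π (f z) = γ (f z)) :
    Semiconj f ⇑(ρ * πh⁻¹) ⇑(γ * π⁻¹) := fun x => by
  obtain ⟨z, rfl⟩ := πh.surjective x
  simp only [Perm.mul_apply, Perm.coe_inv, symm_apply_apply, hρ.eq, hπh.eq, sq, hπγ]

end ParityReversing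

section Blocks

variable {ι : Type*}

def posParity {n : ι → ℕ} (x : (i : ι) × Fin (n i)) : ZMod 2 := x.2.val

/-- With 0-based positions, `2 * u + 1` is the paper's even number `2 (u + 1)`. -/
def oddEmb (r : ι → ℕ) (x : (i : ι) × Fin (r i)) : (i : ι) × Fin (2 * r i) :=
  ⟨x.1, ⟨2 * x.2.val + 1, by have := x.2.isLt; omega⟩⟩

theorem oddEmb_injective (r : ι → ℕ) : Injective (oddEmb r) := by
  rintro ⟨i, u⟩ ⟨j, v⟩ h
  simp only [oddEmb, Sigma.mk.injEq] at h
  obtain ⟨rfl, h⟩ := h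
  simp only [heq_eq_eq, Fin.mk.injEq] at h
  congr
  omega

theorem range_oddEmb (r : ι → ℕ) : Set.range (oddEmb r) = {x | posParity x = 1} := by
  ext x
  simp only [Set.mem_range, Set.mem_ofPred_eq, posParity, ZMod.natCast_eq_one_iff_odd, Nat.odd_iff]
  constructor
  · rintro ⟨z, rfl⟩
    show (2 * z.2.val + 1) % 2 = 1
    omega
  · obtain ⟨i, v⟩ := x
    intro (hv : v.val % 2 = 1)
    refine ⟨⟨i, ⟨v / 2, by omega⟩⟩, Sigma.ext rfl (heq_of_eq (Fin.ext ?_))⟩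
    show 2 * (v.val / 2) + 1 = v.val
    omega

theorem compl_range_oddEmb (r : ι → ℕ) : (Set.range (oddEmb r))ᶜ = {x | posParity x = 0} := by
  ext x
  simp [range_oddEmb, posParity, ZMod.natCast_eq_one_iff_odd, ZMod.natCast_eq_zero_iff_even]

theorem blockRotate_apply (n : ι → ℕ) (x : (i : ι) × Fin (n i)) :
    blockRotate n x = ⟨x.1, finRotate (n x.1) x.2⟩ :=
  rfl

theorem val_finRotate {n : ℕ} (v : Fin n) : (finRotate n v).val = (v.val + 1) % n := by
  cases n with
  | zero => exact v.elim0
  | succ n =>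
    rw [coe_finRotate]
    split_ifs with h
    · simp [h]
    · rw [Nat.mod_eq_of_lt (by have := Fin.val_lt_last h; omega)]

theorem posParity_blockRotate_two_mul (r : ι → ℕ) (x : (i : ι) × Fin (2 * r i)) :
    posParity (blockRotate (fun i => 2 * r i) x) = posParity x + 1 := by
  obtain ⟨i, v⟩ := x
  simp only [blockRotate_apply, posParity, val_finRotate]
  rw [← ZMod.natCast_mod _ 2, Nat.mod_mod_of_dvd _ (dvd_mul_right 2 _), ZMod.natCast_mod]
  push_cast
  rfl

theorem semiconj_oddEmb_blockRotate (r : ι → ℕ) :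
    Semiconj (oddEmb r) (blockRotate r) ⇑(blockRotate (fun i => 2 * r i) ^ 2) := by
  rintro ⟨i, u⟩
  simp only [sq, Perm.mul_apply, blockRotate_apply, oddEmb]
  refine Sigma.ext rfl (heq_of_eq (Fin.ext ?_))
  have ht : (u.val + 1) % r i < r i := Nat.mod_lt _ (by have := u.isLt; omega)
  simp only [val_finRotate]
  rw [show 2 * u.val + 1 + 1 = 2 * (u.val + 1) by ring, Nat.mul_mod_mul_left]
  exact (Nat.mod_eq_of_lt (by omega)).symm

theorem card_sigma_fin_two_mul [Fintype ι] (r : ι → ℕ) :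
    Nat.card ((i : ι) × Fin (2 * r i)) = 2 * Nat.card ((i : ι) × Fin (r i)) := by
  simp [Finset.mul_sum]

end Blocks

/-- properties of the half `π̌` of a parity-reversing separating `π`.
`dbl` identifies `(i, u)` with the `u`-th even position of block `i`, and `πh = π̌`
is characterised by `dbl (π̌ k) = π(π(2k))` (i.e. `π̌ k = π(π(2k))/2`). -/
theorem stmt14 (m : ℕ) (r : Fin m → ℕ)
    (γ : Equiv.Perm ((i : Fin m) × Fin (2 * r i)))
    (hγ : γ = blockRotate (fun i => 2 * r i))
    (π : Equiv.Perm ((i : Fin m) × Fin (2 * r i)))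
    (hpar : ∀ x, (π x).2.val % 2 ≠ x.2.val % 2)
    (hsep : Separates (γ * π⁻¹) {x | x.2.val % 2 = 0})
    (dbl : ((i : Fin m) × Fin (r i)) → ((i : Fin m) × Fin (2 * r i)))
    (hdbl : ∀ x, dbl x = ⟨x.1, ⟨2 * x.2.val + 1, by have := x.2.isLt; omega⟩⟩)
    (πh : Equiv.Perm ((i : Fin m) × Fin (r i)))
    (hπh : ∀ x, dbl (πh x) = π (π (dbl x))) :
    numCycles π = numCycles πh ∧
    (∀ x y, (blockRotate r * πh⁻¹) x = y ↔ (γ * π⁻¹) (dbl x) = dbl y) ∧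
    numCycles (blockRotate r * πh⁻¹) + Nat.card ((i : Fin m) × Fin (r i)) =
      numCycles (γ * π⁻¹) := by
  obtain rfl : dbl = oddEmb r := funext hdbl
  have hπ_par (x) : posParity (π x) = posParity x + 1 := by
    rw [posParity, posParity, ← Nat.cast_one, ← Nat.cast_add, ZMod.natCast_eq_natCast_iff']
    have := hpar x
    omega
  have hγ_par : ∀ x, posParity (γ x) = posParity x + 1 := hγ ▸ posParity_blockRotate_two_mul r
  have hsep_par : Separates (γ * π⁻¹) {x | posParity x = 0} := by
    simpa only [posParity, ZMod.natCast_eq_zero_iff_even, Nat.even_iff] using hsep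
  have hπh_sq : Semiconj (oddEmb r) πh ⇑(π ^ 2) := hπh
  have hsemi : Semiconj (oddEmb r) ⇑(blockRotate r * πh⁻¹) ⇑(γ * π⁻¹) :=
    semiconj_mul_inv hπh_sq (hγ ▸ semiconj_oddEmb_blockRotate r) fun z =>
      apply_eq_of_separates hπ_par hγ_par hsep_par ((range_oddEmb r).subset ⟨z, rfl⟩)
  refine ⟨(numCycles_eq_of_semiconj_sq hπ_par (oddEmb_injective r) (range_oddEmb r) hπh_sq).symm,
    fun x y => by rw [← hsemi.eq, (oddEmb_injective r).eq_iff], ?_⟩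
  have hcount := numCycles_add_card_eq (oddEmb_injective r)
    (sameCycle_iff_of_semiconj (oddEmb_injective r) hsemi) fun y hy =>
      mul_inv_apply_eq_self_of_separates hπ_par hγ_par hsep_par ((compl_range_oddEmb r).subset hy)
  rw [card_sigma_fin_two_mul] at hcount
  omega

end ThirdOrderFree
end

section
/- Let π ∈ S_{r+s+t}, and define π_⃗n ∈ S_n as the merging of the consecutive cycles T₁,…,T_{r+s+t} of γ (of lengths n₁,…,n_{r+s+t}) along the cycles of π. Let σ ∈ S_n be such that σ⁻¹π_⃗n separates the points of N = {n₁, n₁+n₂, …, n}. Then the restriction of σ⁻¹γ_{p,q,l} to N is equal to the restriction of π_⃗n⁻¹γ_{p,q,l} to N; consequently σ⁻¹γ_{p,q,l} separates N if and only if π = γ_{r,s,t}. -/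
open Equiv

namespace ThirdOrderFree

variable {α : Type*}

/-! Write `γ = mergePerm n hn (blockRotate ![r, s, t])` and `b = π_{\vec n}⁻¹ γ`. The permutation
`b` fixes every point outside `N` and moves the last point of block `i` to the last point of
block `π⁻¹ γ_{r,s,t} i`. Since `σ⁻¹ γ = (σ⁻¹ π_{\vec n}) b` and the first factor separates `N`,
a first-return path of `σ⁻¹ γ` from `x ∈ N` makes one step of `b` to `b x ∈ N` and then runs
through the cycle of `σ⁻¹ π_{\vec n}` of `b x`, which meets `N` only in `b x`. Hence both
restrictions to `N` equal `b`, and `σ⁻¹ γ` separates `N` iff `b` fixes `N`, i.e. iff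
`π = γ_{r,s,t}`. -/

section FirstReturn

theorem firstReturn_eq_of_isLeast {σ : Perm α} {p : α → Prop} {x : α} {k : ℕ}
    (hk : IsLeast {k : ℕ | 0 < k ∧ p ((σ ^ k) x)} k) : firstReturn σ p x = (σ ^ k) x := by
  rw [firstReturn, hk.csInf_eq]

theorem exists_isLeast_return [Finite α] (σ : Perm α) {p : α → Prop} {x : α} (hx : p x) :
    ∃ k, IsLeast {k : ℕ | 0 < k ∧ p ((σ ^ k) x)} k :=
  ⟨_, isLeast_csInf ⟨orderOf σ, orderOf_pos σ, by simpa [pow_orderOf_eq_one]⟩⟩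

theorem restrictPerm_eq_of_forall_apply {σ : Perm α} {p : α → Prop} (e : Perm {x // p x})
    (he : ∀ x : {x // p x}, (e x : α) = firstReturn σ p x) : restrictPerm σ p = e := by
  have h : ∃ e : Perm {x // p x}, ∀ x : {x // p x}, (e x : α) = firstReturn σ p x := ⟨e, he⟩
  rw [restrictPerm, dif_pos h]
  ext x
  exact (h.choose_spec x).trans (he x).symm

theorem firstReturn_eq_self_of_separates [Finite α] {τ : Perm α} {N : Set α}
    (hsep : Separates τ N) {x : α} (hx : x ∈ N) : firstReturn τ (· ∈ N) x = x := by
  obtain ⟨k, hk⟩ := exists_isLeast_return τ hx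
  rw [firstReturn_eq_of_isLeast hk]
  exact (hsep x hx _ hk.1.2 ⟨k, by rw [zpow_natCast]⟩).symm

theorem apply_iff_of_fixes_compl {b : Perm α} {p : α → Prop} (hb : ∀ z, ¬p z → b z = z)
    (x : α) : p (b x) ↔ p x := by
  refine ⟨fun hbx => by_contra fun hx => hx (hb x hx ▸ hbx), fun hx => by_contra fun hbx => ?_⟩
  rw [b.injective (hb _ hbx)] at hbx
  exact hbx hx

theorem firstReturn_mul_of_fixes_compl [Finite α] {a b : Perm α} {p : α → Prop}
    (hb : ∀ z, ¬p z → b z = z) {x : α} (hx : p x) :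
    firstReturn (a * b) p x = firstReturn a p (b x) := by
  obtain ⟨k, hk⟩ := exists_isLeast_return a ((apply_iff_of_fixes_compl hb x).2 hx)
  have hout : ∀ j, 0 < j → j < k → ¬p ((a ^ j) (b x)) := fun j hj hjk hp =>
    (hk.2 ⟨hj, hp⟩).not_gt hjk
  -- before returning to `p`, every step of `a * b` is a step of `a`
  have hpow : ∀ j < k, ((a * b) ^ (j + 1)) x = (a ^ (j + 1)) (b x) := by
    intro j hj
    induction j with
    | zero => rfl
    | succ j ih =>
      rw [pow_succ', Perm.mul_apply, ih (by omega), Perm.mul_apply,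
        hb _ (hout _ j.succ_pos (by omega)), pow_succ' a (j + 1)]
      rfl
  obtain ⟨j, rfl⟩ := Nat.exists_eq_succ_of_ne_zero hk.1.1.ne'
  have hk' : IsLeast {k : ℕ | 0 < k ∧ p (((a * b) ^ k) x)} (j + 1) := by
    refine ⟨⟨hk.1.1, by rw [hpow j (by omega)]; exact hk.1.2⟩, ?_⟩
    rintro (_ | i) ⟨hi, hpi⟩
    · exact absurd hi (lt_irrefl 0)
    · by_contra! hlt
      exact hout (i + 1) hi hlt (hpow i (by omega) ▸ hpi)
  rw [firstReturn_eq_of_isLeast hk, firstReturn_eq_of_isLeast hk', hpow j (by omega)]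

theorem restrictPerm_mul_of_separates [Finite α] {a b : Perm α} {N : Set α}
    (ha : Separates a N) (hb : ∀ z ∉ N, b z = z) :
    restrictPerm (a * b) (· ∈ N) = b.subtypePerm (apply_iff_of_fixes_compl hb) :=
  restrictPerm_eq_of_forall_apply _ fun x => by
    rw [firstReturn_mul_of_fixes_compl hb x.2,
      firstReturn_eq_self_of_separates ha ((apply_iff_of_fixes_compl hb x).2 x.2)]
    rfl

theorem separates_one (N : Set α) : Separates (1 : Perm α) N :=
  fun _ _ _ _ h => Perm.sameCycle_one.mp h

theorem restrictPerm_of_fixes_compl [Finite α] {b : Perm α} {N : Set α}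
    (hb : ∀ z ∉ N, b z = z) :
    restrictPerm b (· ∈ N) = b.subtypePerm (apply_iff_of_fixes_compl hb) := by
  simpa using restrictPerm_mul_of_separates (separates_one N) hb

theorem apply_eq_self_of_separates_mul [Finite α] {a b : Perm α} {N : Set α}
    (ha : Separates a N) (hb : ∀ z ∉ N, b z = z) (hab : Separates (a * b) N)
    {x : α} (hx : x ∈ N) : b x = x := by
  have h := firstReturn_mul_of_fixes_compl (a := a) hb hx
  rwa [firstReturn_eq_self_of_separates hab hx,
    firstReturn_eq_self_of_separates ha ((apply_iff_of_fixes_compl hb x).2 hx), eq_comm] at h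

end FirstReturn

theorem finRotate_val (m : ℕ) (j : Fin m) : (finRotate m j : ℕ) = (j + 1) % m := by
  rcases m with _ | m
  · exact j.elim0
  · rw [finRotate_apply, Fin.val_add, Fin.val_one', Nat.add_mod_mod]

section Blocks

variable {ι : Type*} (n : ι → ℕ) (hn : ∀ i, 0 < n i)

def blockLast (i : ι) : (i : ι) × Fin (n i) :=
  ⟨i, ⟨n i - 1, Nat.sub_lt (hn i) one_pos⟩⟩

theorem mergePerm_apply_blockLast (π : Perm ι) (i : ι) :
    mergePerm n hn π (blockLast n hn i) = zeroSection n hn (π i) := by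
  have h : blockRotate n (blockLast n hn i) = zeroSection n hn i := by
    refine congrArg (Sigma.mk i) (Fin.ext ?_)
    change (finRotate (n i) ⟨n i - 1, _⟩ : ℕ) = 0
    rw [finRotate_val, Nat.sub_add_cancel (hn i), Nat.mod_self]
  rw [mergePerm, Perm.mul_apply, h, Perm.extendDomain_apply_image]

theorem mergePerm_apply_of_ne_last (π : Perm ι) {x : (i : ι) × Fin (n i)}
    (hx : (x.2 : ℕ) ≠ n x.1 - 1) : mergePerm n hn π x = blockRotate n x := by
  refine Perm.extendDomain_apply_not_subtype π (zeroSection n hn) ?_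
  change (finRotate (n x.1) x.2 : ℕ) ≠ 0
  rw [finRotate_val, Nat.mod_eq_of_lt (by omega)]
  omega

theorem mergePerm_inv_mul_apply_blockLast (π ρ : Perm ι) (i : ι) :
    ((mergePerm n hn π)⁻¹ * mergePerm n hn ρ) (blockLast n hn i) =
      blockLast n hn (π⁻¹ (ρ i)) := by
  rw [Perm.mul_apply, Perm.inv_eq_iff_eq, mergePerm_apply_blockLast,
    mergePerm_apply_blockLast, ← Perm.mul_apply, mul_inv_cancel,
    Perm.one_apply]

theorem mergePerm_inv_mul_apply_of_ne_last (π ρ : Perm ι) {x : (i : ι) × Fin (n i)}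
    (hx : (x.2 : ℕ) ≠ n x.1 - 1) : ((mergePerm n hn π)⁻¹ * mergePerm n hn ρ) x = x := by
  rw [Perm.mul_apply, Perm.inv_eq_iff_eq, mergePerm_apply_of_ne_last n hn ρ hx,
    mergePerm_apply_of_ne_last n hn π hx]

end Blocks

/-- if `σ⁻¹π_{\vec n}` separates `N` (the set of last elements of the
blocks `T i`), then the first-return restrictions of `σ⁻¹γ_{p,q,l}` and
`π_{\vec n}⁻¹γ_{p,q,l}` to `N` coincide; consequently `σ⁻¹γ_{p,q,l}` separates `N`
iff `π = γ_{r,s,t}`. Here `γ_{p,q,l} = mergePerm n hn (blockRotate ![r,s,t])`. -/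
theorem stmt16 (r s t : ℕ) (n : ((i : Fin 3) × Fin (![r, s, t] i)) → ℕ)
    (hn : ∀ x, 0 < n x)
    (N : Set ((x : (i : Fin 3) × Fin (![r, s, t] i)) × Fin (n x)))
    (hN : N = {y | y.2.val = n y.1 - 1})
    (π : Equiv.Perm ((i : Fin 3) × Fin (![r, s, t] i)))
    (σ : Equiv.Perm ((x : (i : Fin 3) × Fin (![r, s, t] i)) × Fin (n x)))
    (hsep : Separates (σ⁻¹ * mergePerm n hn π) N) :
    restrictPerm (σ⁻¹ * mergePerm n hn (blockRotate ![r, s, t])) (· ∈ N) =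
      restrictPerm ((mergePerm n hn π)⁻¹ * mergePerm n hn (blockRotate ![r, s, t]))
        (· ∈ N) ∧
    (Separates (σ⁻¹ * mergePerm n hn (blockRotate ![r, s, t])) N ↔
      π = blockRotate ![r, s, t]) := by
  set γ := blockRotate ![r, s, t]
  set b := (mergePerm n hn π)⁻¹ * mergePerm n hn γ
  have hfactor : σ⁻¹ * mergePerm n hn γ = (σ⁻¹ * mergePerm n hn π) * b := by
    rw [mul_assoc, mul_inv_cancel_left]
  have hb : ∀ z ∉ N, b z = z := fun z hz =>
    mergePerm_inv_mul_apply_of_ne_last n hn π γ (by simpa [hN] using hz)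
  have hlast : ∀ i, blockLast n hn i ∈ N := fun i => hN ▸ rfl
  refine ⟨?_, fun hsepγ => ?_, fun h => h ▸ hsep⟩
  · rw [hfactor, restrictPerm_mul_of_separates hsep hb, restrictPerm_of_fixes_compl hb]
  · rw [hfactor] at hsepγ
    refine inv_mul_eq_one.mp (Perm.ext fun i => ?_)
    have h := apply_eq_self_of_separates_mul hsep hb hsepγ (hlast i)
    rw [mergePerm_inv_mul_apply_blockLast] at h
    exact congrArg Sigma.fst h

end ThirdOrderFree
end

section
/- Let π ∈ S_{p+q+l} and σ ∈ S_NC(p,q,l) with π ≤ σ⁻¹γ_{p,q,l}. If π ∈ NC(p) × S_NC(q,l) (i.e. π is a product of a non-crossing permutation of the first circle and an annular non-crossing permutation of the last two circles), then σ ≲^{(1)} γ_{p,q,l}π⁻¹, meaning: for each block B of σ ∨ γ_{p,q,l}π⁻¹, σ|_B is non-crossing with respect to (γ_{p,q,l}π⁻¹)|_B, and #(σ ∨ γ_{p,q,l}π⁻¹) = #(γ_{p,q,l}π⁻¹) − 1. -/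
open Equiv

/-!
Euler's inequality `#σ + #(σ⁻¹τ) + #τ ≤ n + 2 #(σ ∨ τ)` is proved by cutting points out of the
cycles of `σ⁻¹τ` with transpositions. Equality holds iff it holds on every block of `σ ∨ τ`,
i.e. iff `σ ≲ τ`. For `τ = γπ⁻¹`, the facts that `π` is non-crossing on the two `γ`-invariant
parts and that `π ≤ σ⁻¹γ` evaluate the left side to `n + 2 (#τ - 1)`, while `σ`, which connects
the two parts, glues two cycles of `τ`, so that `#(σ ∨ τ) ≤ #τ - 1`.
-/

namespace Setoid

variable {α : Type*}

/-- `s` with the classes of `a` and `b` merged. -/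
def glue (s : Setoid α) (a b : α) : Setoid α where
  r z w := s z w ∨ (s z a ∧ s b w) ∨ (s z b ∧ s a w)
  iseqv := by
    refine ⟨fun z => Or.inl (s.refl z), ?_, ?_⟩
    · rintro z w (h | ⟨h₁, h₂⟩ | ⟨h₁, h₂⟩)
      exacts [Or.inl (s.symm h), Or.inr (Or.inr ⟨s.symm h₂, s.symm h₁⟩),
        Or.inr (Or.inl ⟨s.symm h₂, s.symm h₁⟩)]
    · rintro z w u (h | ⟨h₁, h₂⟩ | ⟨h₁, h₂⟩) (h' | ⟨h₁', h₂'⟩ | ⟨h₁', h₂'⟩)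
      · exact Or.inl (s.trans h h')
      · exact Or.inr (Or.inl ⟨s.trans h h₁', h₂'⟩)
      · exact Or.inr (Or.inr ⟨s.trans h h₁', h₂'⟩)
      · exact Or.inr (Or.inl ⟨h₁, s.trans h₂ h'⟩)
      · exact Or.inr (Or.inr ⟨s.trans h₁ (s.symm (s.trans h₂ h₁')),
          s.trans (s.symm (s.trans h₂ h₁')) h₂'⟩)
      · exact Or.inl (s.trans h₁ h₂')
      · exact Or.inr (Or.inr ⟨h₁, s.trans h₂ h'⟩)
      · exact Or.inl (s.trans h₁ h₂')
      · exact Or.inl (s.trans h₁ (s.trans (s.symm (s.trans h₂ h₁')) h₂'))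

theorem le_glue (s : Setoid α) (a b : α) : s ≤ s.glue a b := fun _ _ h => Or.inl h

theorem glue_mono {s t : Setoid α} (h : s ≤ t) (a b : α) : s.glue a b ≤ t.glue a b := by
  rintro z w (hzw | ⟨h₁, h₂⟩ | ⟨h₁, h₂⟩)
  exacts [Or.inl (h hzw), Or.inr (Or.inl ⟨h h₁, h h₂⟩), Or.inr (Or.inr ⟨h h₁, h h₂⟩)]

theorem glue_le {s t : Setoid α} (h : s ≤ t) {a b : α} (hab : t a b) : s.glue a b ≤ t := by
  rintro z w (hzw | ⟨h₁, h₂⟩ | ⟨h₁, h₂⟩)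
  exacts [h hzw, t.trans (t.trans (h h₁) hab) (h h₂),
    t.trans (t.trans (h h₁) (t.symm hab)) (h h₂)]

theorem glue_eq_self {s : Setoid α} {a b : α} (hab : s a b) : s.glue a b = s :=
  le_antisymm (glue_le le_rfl hab) (le_glue s a b)

theorem card_quotient_le_of_le [Finite α] {s t : Setoid α} (h : s ≤ t) :
    Nat.card (Quotient t) ≤ Nat.card (Quotient s) :=
  Nat.card_le_card_of_surjective (Quotient.map' id h)
    (Quotient.ind fun x => ⟨⟦x⟧, rfl⟩)

/-- Away from the class of `b`, the quotient map to `s.glue a b` is a bijection. -/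
theorem card_quotient_glue_add_one [Finite α] {s : Setoid α} {a b : α} (hab : ¬ s a b) :
    Nat.card (Quotient (s.glue a b)) + 1 = Nat.card (Quotient s) := by
  classical
  let f : {q : Quotient s // q ≠ ⟦b⟧} → Quotient (s.glue a b) :=
    fun q => Quotient.map' id (le_glue s a b) q.1
  have hf : f.Bijective := by
    constructor
    · rintro ⟨q, hq⟩ ⟨q', hq'⟩ h
      induction q using Quotient.ind with | _ z =>
      induction q' using Quotient.ind with | _ w =>
      have hb : ∀ {u}, (⟦u⟧ : Quotient s) ≠ ⟦b⟧ → ¬ s b u := fun hu h =>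
        hu (Quotient.sound (s.symm h))
      rcases Quotient.exact h with h | ⟨-, h⟩ | ⟨h, -⟩
      exacts [Subtype.ext (Quotient.sound h), absurd h (hb hq'), absurd (s.symm h) (hb hq)]
    · refine Quotient.ind fun z => ?_
      by_cases hz : s b z
      · refine ⟨⟨⟦a⟧, fun h => hab (Quotient.exact h)⟩, Quotient.sound ?_⟩
        exact Or.inr (Or.inl ⟨s.refl a, hz⟩)
      · exact ⟨⟨⟦z⟧, fun h => hz (s.symm (Quotient.exact h))⟩, rfl⟩
  rw [← Nat.card_congr (Equiv.ofBijective f hf), ← Finite.card_option,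
    Nat.card_congr (Equiv.optionSubtypeNe _)]

theorem card_quotient_le_glue_add_one [Finite α] (s : Setoid α) (a b : α) :
    Nat.card (Quotient s) ≤ Nat.card (Quotient (s.glue a b)) + 1 := by
  by_cases hab : s a b
  · rw [glue_eq_self hab]; omega
  · rw [card_quotient_glue_add_one hab]

theorem fun_mk_eq_mk (s : Setoid α) (x : α) : (fun z => (⟦z⟧ : Quotient s) = ⟦x⟧) = s.r x :=
  funext fun _ => propext (Quotient.eq.trans ⟨s.symm, s.symm⟩)

theorem card_subtype_quotient (t : Setoid α) {p : α → Prop} {P : Quotient t → Prop}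
    (hP : ∀ x, P ⟦x⟧ ↔ p x) :
    Nat.card {q // P q} = Nat.card (Quotient (t.comap (Subtype.val : {x // p x} → α))) := by
  refine (Nat.card_congr (Equiv.ofBijective
    (Quotient.lift (fun x : {x // p x} => (⟨⟦x.1⟧, (hP x).2 x.2⟩ : {q // P q}))
      fun x y h => Subtype.ext (Quotient.sound h)) ⟨?_, ?_⟩)).symm
  · refine Quotient.ind₂ fun x y h => Quotient.sound ?_
    exact (Quotient.exact (s := t) (congrArg Subtype.val h) :)
  · rintro ⟨q, hq⟩
    induction q using Quotient.ind with | _ x =>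
    exact ⟨Quotient.mk _ ⟨x, (hP x).1 hq⟩, rfl⟩

end Setoid

namespace ThirdOrderFree

variable {α : Type*}

theorem sameCycleSetoid_le_iff {ρ : Perm α} {s : Setoid α} :
    sameCycleSetoid ρ ≤ s ↔ ∀ x, s x (ρ x) := by
  refine ⟨fun h x => h ⟨1, rfl⟩, fun h => ?_⟩
  suffices hpow : ∀ (i : ℤ) x, s x ((ρ ^ i) x) from fun x _ ⟨i, hi⟩ => hi ▸ hpow i x
  intro i
  induction i using Int.induction_on with
  | zero => exact s.refl
  | succ k ih => exact fun x => s.trans (h x) (by simpa [zpow_add_one] using ih (ρ x))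
  | pred k ih =>
    refine fun x => s.trans (s.symm (by simpa using h (ρ⁻¹ x))) ?_
    simpa [zpow_sub_one] using ih (ρ⁻¹ x)

theorem numCycles_one : numCycles (1 : Perm α) = Nat.card α := by
  have h : sameCycleSetoid (1 : Perm α) = ⊥ := Setoid.ext fun _ _ => Perm.sameCycle_one
  rw [numCycles, h, Nat.card_congr Setoid.quotientBotEquiv]

theorem sameCycleSetoid_inv (σ : Perm α) : sameCycleSetoid σ⁻¹ = sameCycleSetoid σ :=
  Setoid.ext fun _ _ => Perm.sameCycle_inv

theorem numCycles_le_card [Finite α] (σ : Perm α) : numCycles σ ≤ Nat.card α :=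
  Nat.card_le_card_of_surjective _ Quotient.mk_surjective

theorem numCycles_conj (g f : Perm α) : numCycles (g * f * g⁻¹) = numCycles f :=
  Nat.card_congr (Quotient.congr g.symm fun _ _ => Perm.sameCycle_conj)

theorem numCycles_mul_comm (a b : Perm α) : numCycles (a * b) = numCycles (b * a) := by
  rw [← numCycles_conj a (b * a), mul_assoc, mul_inv_cancel_right]

abbrev Invariant (σ : Perm α) (p : α → Prop) : Prop := ∀ x, p (σ x) ↔ p x

section Invariant

variable {σ τ : Perm α} {p : α → Prop}

theorem Invariant.inv (h : Invariant σ p) : Invariant σ⁻¹ p := fun x => by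
  simpa using (h (σ⁻¹ x)).symm

theorem Invariant.mul (hσ : Invariant σ p) (hτ : Invariant τ p) : Invariant (σ * τ) p :=
  fun x => (hσ (τ x)).trans (hτ x)

theorem Invariant.not (h : Invariant σ p) : Invariant σ (fun x => ¬ p x) :=
  fun x => not_congr (h x)

theorem Invariant.sameCycleSetoid_le_ker (h : Invariant σ p) :
    sameCycleSetoid σ ≤ Setoid.ker p :=
  sameCycleSetoid_le_iff.2 fun x => propext (h x).symm

theorem Invariant.iff_of_sameCycle (h : Invariant σ p) {x y : α} (hxy : σ.SameCycle x y) :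
    p x ↔ p y :=
  (h.sameCycleSetoid_le_ker hxy).to_iff

theorem invariant_mk_eq {s : Setoid α} (h : sameCycleSetoid σ ≤ s) (c : Quotient s) :
    Invariant σ (fun x => ⟦x⟧ = c) := fun x => by
  show ⟦σ x⟧ = c ↔ ⟦x⟧ = c
  rw [← Quotient.sound (h (Perm.SameCycle.refl σ x).apply_right)]

theorem firstReturn_eq (h : Invariant σ p) {x : α} (hx : p x) : firstReturn σ p x = σ x := by
  have h₁ : 1 ∈ {k : ℕ | 0 < k ∧ p ((σ ^ k) x)} := ⟨one_pos, by simpa using (h x).2 hx⟩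
  rw [firstReturn, le_antisymm (Nat.sInf_le h₁) (Nat.sInf_mem ⟨1, h₁⟩).1, pow_one]

theorem restrictPerm_eq_subtypePerm (h : Invariant σ p) :
    restrictPerm σ p = σ.subtypePerm h := by
  have hex : ∃ e : Perm {x // p x}, ∀ x : {x // p x}, (e x : α) = firstReturn σ p x :=
    ⟨σ.subtypePerm h, fun x => (firstReturn_eq h x.2).symm⟩
  ext x
  rw [restrictPerm, dif_pos hex, hex.choose_spec, firstReturn_eq h x.2, Perm.subtypePerm_apply]

theorem restrictPerm_mul (hσ : Invariant σ p) (hτ : Invariant τ p) :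
    restrictPerm (σ * τ) p = restrictPerm σ p * restrictPerm τ p := by
  rw [restrictPerm_eq_subtypePerm hσ, restrictPerm_eq_subtypePerm hτ,
    restrictPerm_eq_subtypePerm (hσ.mul hτ), Perm.subtypePerm_mul]

theorem restrictPerm_inv_mul (hσ : Invariant σ p) (hτ : Invariant τ p) :
    restrictPerm (σ⁻¹ * τ) p = (restrictPerm σ p)⁻¹ * restrictPerm τ p := by
  rw [restrictPerm_mul hσ.inv hτ, restrictPerm_eq_subtypePerm hσ,
    restrictPerm_eq_subtypePerm hσ.inv, Perm.subtypePerm_inv]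

theorem sameCycle_restrictPerm (h : Invariant σ p) {x y : {x // p x}} :
    (restrictPerm σ p).SameCycle x y ↔ σ.SameCycle x y := by
  rw [restrictPerm_eq_subtypePerm h]
  exact Perm.sameCycle_subtypePerm

theorem sameCycleSetoid_restrictPerm (h : Invariant σ p) :
    sameCycleSetoid (restrictPerm σ p) = (sameCycleSetoid σ).comap Subtype.val :=
  Setoid.ext fun _ _ => sameCycle_restrictPerm h

theorem numCycles_restrictPerm (h : Invariant σ p) :
    numCycles (restrictPerm σ p) =
      Nat.card (Quotient ((sameCycleSetoid σ).comap (Subtype.val : {x // p x} → α))) := by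
  rw [numCycles, sameCycleSetoid_restrictPerm h]

theorem numCycles_eq_add [Finite α] (h : Invariant σ p) :
    numCycles σ = numCycles (restrictPerm σ p) + numCycles (restrictPerm σ fun x => ¬ p x) := by
  classical
  let P : Quotient (sameCycleSetoid σ) → Prop :=
    Quotient.lift p fun _ _ hxy => propext (h.iff_of_sameCycle hxy)
  rw [numCycles, ← Nat.card_congr (Equiv.sumCompl P), Nat.card_sum,
    Setoid.card_subtype_quotient _ (p := p) fun _ => Iff.rfl,
    Setoid.card_subtype_quotient _ (p := fun x => ¬ p x) fun _ => Iff.rfl,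
    numCycles_restrictPerm h, numCycles_restrictPerm h.not]

theorem numCycles_eq_sum [Finite α] {s : Setoid α} [Fintype (Quotient s)]
    (h : sameCycleSetoid σ ≤ s) :
    numCycles σ = ∑ c : Quotient s, numCycles (restrictPerm σ fun x => ⟦x⟧ = c) := by
  let f : Quotient (sameCycleSetoid σ) → Quotient s := Quotient.map' id h
  rw [numCycles, ← Nat.card_congr (Equiv.sigmaFiberEquiv f), Nat.card_sigma]
  refine Finset.sum_congr rfl fun c _ => ?_
  rw [numCycles_restrictPerm (invariant_mk_eq h c)]
  exact Setoid.card_subtype_quotient _ fun _ => Iff.rfl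

end Invariant

theorem card_eq_add [Finite α] (p : α → Prop) :
    Nat.card α = Nat.card {x // p x} + Nat.card {x // ¬ p x} := by
  classical
  rw [← Nat.card_sum, Nat.card_congr (Equiv.sumCompl p)]

theorem card_eq_sum [Finite α] (s : Setoid α) [Fintype (Quotient s)] :
    Nat.card α = ∑ c : Quotient s, Nat.card {x // ⟦x⟧ = c} := by
  rw [← Nat.card_sigma, Nat.card_congr (Equiv.sigmaFiberEquiv _)]

section Swap

variable [DecidableEq α] {ρ : Perm α} {a b : α}

theorem sameCycle_mul_swap [Finite α] (hab : ¬ ρ.SameCycle a b) :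
    (ρ * swap a b).SameCycle a b := by
  -- Otherwise the points of the `ρ`-cycle of `a` in the `ρ * swap a b`-cycle of `b` are closed
  -- under `ρ` and contain `ρ a`, hence `a`.
  by_contra hS
  have hstep : ∀ z, ρ.SameCycle a z → (ρ * swap a b).SameCycle b z →
      (ρ * swap a b).SameCycle b (ρ z) := fun z hz hbz => by
    have hza : z ≠ a := by rintro rfl; exact hS hbz.symm
    have hzb : z ≠ b := by rintro rfl; exact hab hz
    simpa [swap_apply_of_ne_of_ne hza hzb] using hbz.apply_right
  have hpow : ∀ n : ℕ, ρ.SameCycle a ((ρ ^ n) (ρ a)) ∧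
      (ρ * swap a b).SameCycle b ((ρ ^ n) (ρ a)) := by
    intro n
    induction n with
    | zero => exact ⟨(Perm.SameCycle.refl ρ a).apply_right, ⟨1, by simp⟩⟩
    | succ n ih =>
      rw [pow_succ', Perm.mul_apply]
      exact ⟨ih.1.apply_right, hstep _ ih.1 ih.2⟩
  obtain ⟨n, -, hn⟩ := (Perm.SameCycle.refl ρ a).apply_left.exists_pow_eq'
  exact hS (hn ▸ (hpow n).2).symm

theorem sameCycleSetoid_le_glue_mul_swap (ρ : Perm α) (a b : α) :
    sameCycleSetoid ρ ≤ (sameCycleSetoid (ρ * swap a b)).glue a b := by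
  refine sameCycleSetoid_le_iff.2 fun z => ?_
  by_cases hza : z = a
  · subst hza
    refine Or.inr (Or.inl ⟨Perm.SameCycle.refl _ _, ⟨1, ?_⟩⟩)
    simp
  by_cases hzb : z = b
  · subst hzb
    refine Or.inr (Or.inr ⟨Perm.SameCycle.refl _ _, ⟨1, ?_⟩⟩)
    simp
  · refine Or.inl ⟨1, ?_⟩
    simp [swap_apply_of_ne_of_ne hza hzb]

variable [Finite α]

theorem numCycles_mul_swap_add_one (hab : ¬ ρ.SameCycle a b) :
    numCycles (ρ * swap a b) + 1 = numCycles ρ := by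
  have hS := sameCycle_mul_swap hab
  have hle := sameCycleSetoid_le_glue_mul_swap (ρ * swap a b) a b
  rw [mul_swap_mul_self] at hle
  have hge := sameCycleSetoid_le_glue_mul_swap ρ a b
  rw [Setoid.glue_eq_self hS] at hge
  have heq : sameCycleSetoid (ρ * swap a b) = (sameCycleSetoid ρ).glue a b :=
    le_antisymm hle (Setoid.glue_le hge hS)
  rw [numCycles, heq, Setoid.card_quotient_glue_add_one hab, numCycles]

theorem numCycles_mul_swap_le (ρ : Perm α) (a b : α) :
    numCycles (ρ * swap a b) ≤ numCycles ρ + 1 :=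
  (Setoid.card_quotient_le_glue_add_one _ a b).trans
    (Nat.add_le_add_right (Setoid.card_quotient_le_of_le
      (sameCycleSetoid_le_glue_mul_swap ρ a b)) 1)

end Swap

section Join

variable {σ τ : Perm α}

theorem sameCycleSetoid_le_joinSetoid_left (σ τ : Perm α) :
    sameCycleSetoid σ ≤ joinSetoid σ τ := le_sup_left

theorem sameCycleSetoid_le_joinSetoid_right (σ τ : Perm α) :
    sameCycleSetoid τ ≤ joinSetoid σ τ := le_sup_right

theorem sameCycleSetoid_mul_le_joinSetoid (σ τ : Perm α) :
    sameCycleSetoid (σ * τ) ≤ joinSetoid σ τ :=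
  sameCycleSetoid_le_iff.2 fun z => (joinSetoid σ τ).trans
    (sameCycleSetoid_le_joinSetoid_right σ τ (Perm.SameCycle.refl τ z).apply_right)
    (sameCycleSetoid_le_joinSetoid_left σ τ (Perm.SameCycle.refl σ (τ z)).apply_right)

theorem joinSetoid_mul_left (σ τ : Perm α) : joinSetoid σ (σ⁻¹ * τ) = joinSetoid σ τ := by
  have hinv : ∀ τ, joinSetoid σ⁻¹ τ = joinSetoid σ τ := fun τ => by
    rw [joinSetoid, joinSetoid, sameCycleSetoid_inv]
  have key : ∀ σ τ : Perm α, joinSetoid σ (σ * τ) ≤ joinSetoid σ τ := fun σ τ =>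
    sup_le le_sup_left (sameCycleSetoid_mul_le_joinSetoid σ τ)
  refine le_antisymm ?_ ?_
  · rw [← hinv, ← hinv τ]
    exact key σ⁻¹ τ
  · simpa using key σ (σ⁻¹ * τ)

theorem numBlocks_mul_left (σ τ : Perm α) : numBlocks σ (σ⁻¹ * τ) = numBlocks σ τ := by
  rw [numBlocks, joinSetoid_mul_left, numBlocks]

theorem numBlocks_one_right (σ : Perm α) : numBlocks σ 1 = numCycles σ := by
  have h : sameCycleSetoid (1 : Perm α) = ⊥ := Setoid.ext fun _ _ => Perm.sameCycle_one
  rw [numBlocks, joinSetoid, h, sup_bot_eq, numCycles]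

theorem Invariant.joinSetoid_le_ker {p : α → Prop} (hσ : Invariant σ p) (hτ : Invariant τ p) :
    joinSetoid σ τ ≤ Setoid.ker p :=
  sup_le hσ.sameCycleSetoid_le_ker hτ.sameCycleSetoid_le_ker

theorem joinSetoid_restrictPerm {p : α → Prop} (hσ : Invariant σ p) (hτ : Invariant τ p) :
    joinSetoid (restrictPerm σ p) (restrictPerm τ p) = (joinSetoid σ τ).comap Subtype.val := by
  refine le_antisymm ?_ fun x y hxy => ?_
  · rw [joinSetoid, sameCycleSetoid_restrictPerm hσ, sameCycleSetoid_restrictPerm hτ]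
    exact sup_le (fun _ _ h => le_sup_left (a := sameCycleSetoid σ) h)
      (fun _ _ h => le_sup_right (a := sameCycleSetoid σ) h)
  -- The points of `p` joined to `x` inside `p` form a union of blocks of `σ ∨ τ`.
  let P : α → Prop := fun w => ∃ hw : p w,
    joinSetoid (restrictPerm σ p) (restrictPerm τ p) x ⟨w, hw⟩
  have hP : ∀ ρ : Perm α, Invariant ρ p →
      sameCycleSetoid (restrictPerm ρ p) ≤ joinSetoid (restrictPerm σ p) (restrictPerm τ p) →
      Invariant ρ P := fun ρ hρ hle w => by
    refine ⟨fun ⟨hw, h⟩ => ⟨(hρ w).1 hw, ?_⟩, fun ⟨hw, h⟩ => ⟨(hρ w).2 hw, ?_⟩⟩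
    all_goals
      refine (joinSetoid _ _).trans h (hle ((sameCycle_restrictPerm hρ).2 ?_))
      simp [Perm.SameCycle.refl]
  have hJ : joinSetoid σ τ ≤ Setoid.ker P :=
    (hP σ hσ le_sup_left).joinSetoid_le_ker (hP τ hτ le_sup_right)
  have hy : P y := Setoid.ker_def.1 (hJ hxy) ▸ ⟨x.2, (joinSetoid _ _).refl x⟩
  exact hy.snd

theorem joinTop_restrictPerm_mk_eq (σ τ : Perm α) (c : Quotient (joinSetoid σ τ)) :
    JoinTop (restrictPerm σ fun x => ⟦x⟧ = c) (restrictPerm τ fun x => ⟦x⟧ = c) := fun x y => by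
  rw [joinSetoid_restrictPerm (invariant_mk_eq (sameCycleSetoid_le_joinSetoid_left σ τ) c)
    (invariant_mk_eq (sameCycleSetoid_le_joinSetoid_right σ τ) c)]
  exact (Quotient.exact (s := joinSetoid σ τ) (x.2.trans y.2.symm) :)

theorem numBlocks_eq_one [Finite α] [Nonempty α] (h : JoinTop σ τ) : numBlocks σ τ = 1 :=
  Nat.card_eq_one_iff_unique.2
    ⟨⟨Quotient.ind₂ fun x y => Quotient.sound (h x y)⟩, ⟨⟦Classical.arbitrary α⟧⟩⟩

theorem not_invariant_of_joinTop {p : α → Prop} (h : JoinTop σ τ) (hτ : Invariant τ p)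
    {u v : α} (hu : p u) (hv : ¬ p v) : ¬ Invariant σ p := fun hσ =>
  hv (Setoid.ker_def.1 (hσ.joinSetoid_le_ker hτ (h u v)) ▸ hu)

/-- A cycle of `σ` leaving an invariant set of `τ` glues two cycles of `τ` in `σ ∨ τ`. -/
theorem numBlocks_lt_numCycles [Finite α] {p : α → Prop} (hσ : ¬ Invariant σ p)
    (hτ : Invariant τ p) : numBlocks σ τ < numCycles τ := by
  obtain ⟨x, hx⟩ := not_forall.1 hσ
  have hsep : ¬ τ.SameCycle x (σ x) := fun h => hx (hτ.iff_of_sameCycle h).symm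
  have hle : (sameCycleSetoid τ).glue x (σ x) ≤ joinSetoid σ τ :=
    Setoid.glue_le le_sup_right
      (sameCycleSetoid_le_joinSetoid_left σ τ (Perm.SameCycle.refl σ x).apply_right)
  have := Setoid.card_quotient_glue_add_one (s := sameCycleSetoid τ) hsep
  have := Setoid.card_quotient_le_of_le hle
  rw [numBlocks, numCycles]
  omega

theorem joinSetoid_le_glue_mul_swap [DecidableEq α] (σ τ : Perm α) (a b : α) :
    joinSetoid σ τ ≤ (joinSetoid σ (τ * swap a b)).glue a b :=
  sup_le (le_sup_left.trans (Setoid.le_glue _ a b))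
    ((sameCycleSetoid_le_glue_mul_swap τ a b).trans (Setoid.glue_mono le_sup_right a b))

end Join

variable [Finite α]

theorem SNC.nonempty {γ π : Perm α} (h : SNC γ π) : Nonempty α := by
  by_contra hα
  have h0 : Nat.card α = 0 := Nat.card_eq_zero.2 (Or.inl (not_nonempty_iff.1 hα))
  have := numCycles_le_card π
  have := numCycles_le_card (π⁻¹ * γ)
  have := numCycles_le_card γ
  have := h.2
  omega

/-- Euler's inequality. By induction on `n - #B`: cutting `b = B a` out of its cycle,
`B = B' * swap a b`, raises `#B` by one and changes `#(A * B)` by at most one; when `A ∨ B'` has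
one block more than `A ∨ B`, `#(A * B)` drops by exactly one. -/
theorem numCycles_add_numCycles_mul_le (A B : Perm α) :
    numCycles A + numCycles B + numCycles (A * B) ≤ Nat.card α + 2 * numBlocks A B := by
  classical
  induction hk : Nat.card α - numCycles B using Nat.strong_induction_on generalizing B with
  | _ k ih =>
  by_cases hB : B = 1
  · subst hB
    rw [mul_one, numBlocks_one_right, numCycles_one]
    omega
  obtain ⟨a, ha⟩ : ∃ a, B a ≠ a := not_forall.1 fun h => hB (Perm.ext h)
  set b := B a
  set B' := B * swap a b
  have hB'b : B' b = b := by simp [B', b]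
  have hcut : numCycles B' = numCycles B + 1 := by
    have := numCycles_mul_swap_add_one (ρ := B') fun h => ha (h.eq_of_right hB'b).symm
    rw [mul_swap_mul_self] at this
    omega
  have hIH := ih _ (by have := numCycles_le_card B'; omega) B' rfl
  have hab : joinSetoid A B a b :=
    sameCycleSetoid_le_joinSetoid_right A B (Perm.SameCycle.refl B a).apply_right
  have hJ' := joinSetoid_le_glue_mul_swap A B' a b
  rw [mul_swap_mul_self, Setoid.glue_eq_self hab] at hJ'
  have hJ : joinSetoid A B = (joinSetoid A B').glue a b :=
    le_antisymm (joinSetoid_le_glue_mul_swap A B a b) (Setoid.glue_le hJ' hab)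
  have hAB : A * B = A * B' * swap a b := by rw [mul_assoc, mul_swap_mul_self]
  by_cases hc : joinSetoid A B' a b
  · have hblocks : numBlocks A B = numBlocks A B' := by
      rw [numBlocks, hJ, Setoid.glue_eq_self hc]; rfl
    have := numCycles_mul_swap_le (A * B') a b
    rw [← hAB] at this
    omega
  · have hblocks : numBlocks A B + 1 = numBlocks A B' := by
      rw [numBlocks, hJ, Setoid.card_quotient_glue_add_one hc]; rfl
    have := numCycles_mul_swap_add_one fun h => hc (sameCycleSetoid_mul_le_joinSetoid A B' h)
    rw [← hAB] at this
    omega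

theorem numCycles_add_numCycles_inv_mul_le (σ τ : Perm α) :
    numCycles σ + numCycles (σ⁻¹ * τ) + numCycles τ ≤ Nat.card α + 2 * numBlocks σ τ := by
  simpa [numBlocks_mul_left] using numCycles_add_numCycles_mul_le σ (σ⁻¹ * τ)

/-- Euler's inequality holds on each block of `σ ∨ τ`, and these add up to the global one. -/
theorem ncRel_of_add_numCycles_eq {σ τ : Perm α}
    (h : numCycles σ + numCycles (σ⁻¹ * τ) + numCycles τ = Nat.card α + 2 * numBlocks σ τ) :
    ncRel σ τ := by
  classical
  have : Fintype (Quotient (joinSetoid σ τ)) := Fintype.ofFinite _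
  have hσJ := sameCycleSetoid_le_joinSetoid_left σ τ
  have hτJ := sameCycleSetoid_le_joinSetoid_right σ τ
  have hστJ : sameCycleSetoid (σ⁻¹ * τ) ≤ joinSetoid σ τ :=
    (sameCycleSetoid_le_joinSetoid_right σ (σ⁻¹ * τ)).trans (joinSetoid_mul_left σ τ).le
  let F : Quotient (joinSetoid σ τ) → ℕ := fun c =>
    numCycles (restrictPerm σ fun x => ⟦x⟧ = c) +
      numCycles ((restrictPerm σ fun x => ⟦x⟧ = c)⁻¹ * restrictPerm τ fun x => ⟦x⟧ = c) +
      numCycles (restrictPerm τ fun x => ⟦x⟧ = c)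
  have hblock : ∀ c, F c ≤ Nat.card {x // ⟦x⟧ = c} + 2 := fun c => by
    have : Nonempty {x // ⟦x⟧ = c} := by
      induction c using Quotient.ind with | _ x => exact ⟨⟨x, rfl⟩⟩
    simpa [numBlocks_eq_one (joinTop_restrictPerm_mk_eq σ τ c)] using
      numCycles_add_numCycles_inv_mul_le (restrictPerm σ fun x => ⟦x⟧ = c)
        (restrictPerm τ fun x => ⟦x⟧ = c)
  have hsum : ∑ c, F c = ∑ c : Quotient (joinSetoid σ τ), (Nat.card {x // ⟦x⟧ = c} + 2) := by
    have hmul : ∀ c : Quotient (joinSetoid σ τ), restrictPerm (σ⁻¹ * τ) (fun x => ⟦x⟧ = c) =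
        (restrictPerm σ fun x => ⟦x⟧ = c)⁻¹ * restrictPerm τ fun x => ⟦x⟧ = c := fun c =>
      restrictPerm_inv_mul (invariant_mk_eq hσJ c) (invariant_mk_eq hτJ c)
    rw [numCycles_eq_sum hσJ, numCycles_eq_sum hστJ, numCycles_eq_sum hτJ,
      card_eq_sum (joinSetoid σ τ), numBlocks, Nat.card_eq_fintype_card,
      Fintype.card_eq_sum_ones] at h
    simp only [hmul] at h
    simpa [F, Finset.sum_add_distrib, Finset.mul_sum, mul_comm] using h
  have heq := (Finset.sum_eq_sum_iff_of_le fun c _ => hblock c).1 hsum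
  intro x
  rw [← Setoid.fun_mk_eq_mk]
  exact ⟨joinTop_restrictPerm_mk_eq σ τ ⟦x⟧, heq ⟦x⟧ (Finset.mem_univ _)⟩

/-- Summing the defining identity of `π ≤ ρ` over the cycles of `ρ`. -/
theorem le'.numCycles_add {π ρ : Perm α} (hle : le' π ρ) :
    numCycles π + numCycles (π⁻¹ * ρ) = Nat.card α + numCycles ρ := by
  classical
  have : Fintype (Quotient (sameCycleSetoid ρ)) := Fintype.ofFinite _
  have hπ : sameCycleSetoid π ≤ sameCycleSetoid ρ := hle.1
  have hπρ : sameCycleSetoid (π⁻¹ * ρ) ≤ sameCycleSetoid ρ := by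
    refine sameCycleSetoid_le_iff.2 fun x => (Perm.SameCycle.refl ρ x).apply_right.trans ?_
    exact hle.1 _ _ (by simp [Perm.SameCycle.refl])
  rw [numCycles_eq_sum hπ, numCycles_eq_sum hπρ, card_eq_sum (sameCycleSetoid ρ),
    numCycles, Nat.card_eq_fintype_card, Fintype.card_eq_sum_ones, ← Finset.sum_add_distrib,
    ← Finset.sum_add_distrib]
  refine Finset.sum_congr rfl fun c _ => ?_
  induction c using Quotient.ind with | _ x =>
  have hρ := invariant_mk_eq (le_refl (sameCycleSetoid ρ)) ⟦x⟧
  rw [restrictPerm_inv_mul (invariant_mk_eq hπ ⟦x⟧) hρ, Setoid.fun_mk_eq_mk]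
  exact hle.2 x

theorem numCycles_add_eq_of_SNC_restrictPerm {γ π : Perm α} {p : α → Prop}
    (hγ : Invariant γ p) (hπ : Invariant π p) (h₁ : SNC (restrictPerm γ p) (restrictPerm π p))
    (h₂ : SNC (restrictPerm γ fun x => ¬ p x) (restrictPerm π fun x => ¬ p x)) :
    numCycles π + numCycles (π⁻¹ * γ) + numCycles γ = Nat.card α + 4 := by
  have := h₁.2
  have := h₂.2
  rw [numCycles_eq_add hπ, numCycles_eq_add (hπ.inv.mul hγ), numCycles_eq_add hγ, card_eq_add p,
    restrictPerm_inv_mul hπ hγ, restrictPerm_inv_mul hπ.not hγ.not]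
  omega

theorem ncRel_mul_inv_of_SNC_restrictPerm {γ π σ : Perm α} {p : α → Prop}
    (hγ : Invariant γ p) (hπ : Invariant π p) (hσ : SNC γ σ) (hle : le' π (σ⁻¹ * γ))
    (h₁ : SNC (restrictPerm γ p) (restrictPerm π p))
    (h₂ : SNC (restrictPerm γ fun x => ¬ p x) (restrictPerm π fun x => ¬ p x)) :
    ncRel σ (γ * π⁻¹) ∧ numBlocks σ (γ * π⁻¹) + 1 = numCycles (γ * π⁻¹) := by
  have hsplit := numCycles_add_eq_of_SNC_restrictPerm hγ hπ h₁ h₂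
  have hgeo := hle.numCycles_add
  have hτ : numCycles (γ * π⁻¹) = numCycles (π⁻¹ * γ) := numCycles_mul_comm _ _
  have hστ : numCycles (σ⁻¹ * (γ * π⁻¹)) = numCycles (π⁻¹ * (σ⁻¹ * γ)) := by
    rw [← mul_assoc, numCycles_mul_comm]
  have hEuler := numCycles_add_numCycles_inv_mul_le σ (γ * π⁻¹)
  obtain ⟨u⟩ := h₁.nonempty
  obtain ⟨v⟩ := h₂.nonempty
  have hlt := numBlocks_lt_numCycles (not_invariant_of_joinTop hσ.1 hγ u.2 v.2) (hγ.mul hπ.inv)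
  have := hσ.2
  exact ⟨ncRel_of_add_numCycles_eq (by omega), by omega⟩

/-- if `σ ∈ S_NC(p,q,l)`, `π ≤ σ⁻¹γ` and `π ∈ NC(p) × S_NC(q,l)`
(the first circle is `π`-invariant, and the restrictions of `π` to the first circle
and to the union of the last two are non-crossing w.r.t. the restrictions of `γ`),
then `σ ≲⁽¹⁾ γπ⁻¹`. -/
theorem stmt17 (p q l : ℕ)
    (γ : Equiv.Perm ((i : Fin 3) × Fin (![p, q, l] i)))
    (hγ : γ = blockRotate ![p, q, l])
    (π σ : Equiv.Perm ((i : Fin 3) × Fin (![p, q, l] i)))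
    (hσ : SNC γ σ) (hle : le' π (σ⁻¹ * γ))
    (hπ1 : ∀ x, (π x).1 = 0 ↔ x.1 = 0)
    (hπ2 : SNC (restrictPerm γ (fun x => x.1 = 0)) (restrictPerm π (fun x => x.1 = 0)))
    (hπ3 : SNC (restrictPerm γ (fun x => x.1 ≠ 0)) (restrictPerm π (fun x => x.1 ≠ 0))) :
    ncRel σ (γ * π⁻¹) ∧ numBlocks σ (γ * π⁻¹) + 1 = numCycles (γ * π⁻¹) := by
  have hγ0 : Invariant γ fun x => x.1 = 0 := fun x => by subst hγ; rfl
  exact ncRel_mul_inv_of_SNC_restrictPerm hγ0 hπ1 hσ hle hπ2 hπ3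

end ThirdOrderFree
end
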